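/- arXiv:2406.14375 — 7 statements merged into one kernel-verified Lean document; each statement's English description precedes it below -/
import Mathlib

section
/- If q² is a primitive l-th root of unity (l > 1), then x^l, y^l and z^l are central elements of A(α,β,γ). -/
/-! If `a * b = c • (b * a) + d` for scalars `c, d`, then by induction
`a ^ (n + 1) * b = c ^ (n + 1) • (b * a ^ (n + 1)) + (1 + c + ⋯ + c ^ n) • d • a ^ n`.
When `c ≠ 1` and `c ^ l = 1`, the geometric sum `1 + c + ⋯ + c ^ (l - 1)` vanishes, so `a ^ l`
commutes with `b`; reading the relation backwards as `b * a = c⁻¹ • (a * b) - c⁻¹ • d`, so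
does `b ^ l` with `a`. Each pair of generators of `A(α,β,γ)` satisfies such a relation with
`c = q ^ 2` or `c = (q ^ 2)⁻¹`, and an element commuting with a set of algebra generators is
central. -/

noncomputable section

open FreeAlgebra

/-- The defining relations of the 3-cyclic quantum Weyl algebra `A(α,β,γ)`:
`xy = q²yx + α`, `xz = q⁻²zx + β`, `yz = q²zy + γ`. -/
inductive CQWRel (K : Type) [Field K] (q α β γ : K) :
    FreeAlgebra K (Fin 3) → FreeAlgebra K (Fin 3) → Prop
  | xy : CQWRel K q α β γ (ι K (0 : Fin 3) * ι K 1)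
      (q ^ 2 • (ι K (1 : Fin 3) * ι K 0) + algebraMap K _ α)
  | xz : CQWRel K q α β γ (ι K (0 : Fin 3) * ι K 2)
      (q⁻¹ ^ 2 • (ι K (2 : Fin 3) * ι K 0) + algebraMap K _ β)
  | yz : CQWRel K q α β γ (ι K (1 : Fin 3) * ι K 2)
      (q ^ 2 • (ι K (2 : Fin 3) * ι K 1) + algebraMap K _ γ)

/-- The 3-cyclic quantum Weyl algebra `A(α,β,γ)`. -/
abbrev CQW (K : Type) [Field K] (q α β γ : K) := RingQuot (CQWRel K q α β γ)

variable {K : Type} [Field K]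

/-- The generator `x` of `A(α,β,γ)`. -/
def Xg (q α β γ : K) : CQW K q α β γ := RingQuot.mkAlgHom K (CQWRel K q α β γ) (ι K 0)

/-- The generator `y` of `A(α,β,γ)`. -/
def Yg (q α β γ : K) : CQW K q α β γ := RingQuot.mkAlgHom K (CQWRel K q α β γ) (ι K 1)

/-- The generator `z` of `A(α,β,γ)`. -/
def Zg (q α β γ : K) : CQW K q α β γ := RingQuot.mkAlgHom K (CQWRel K q α β γ) (ι K 2)

section SkewCommutation

variable {F A : Type*} [Field F] [Ring A] [Algebra F A] {a b : A} {c d : F}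

theorem pow_succ_mul_of_mul_eq_smul_add (h : a * b = c • (b * a) + algebraMap F A d) (n : ℕ) :
    a ^ (n + 1) * b =
      c ^ (n + 1) • (b * a ^ (n + 1)) +
        (∑ k ∈ Finset.range (n + 1), c ^ k) • d • a ^ n := by
  induction n with
  | zero => simpa [Algebra.smul_def] using h
  | succ n ih =>
    have hd : a * (d • a ^ n) = d • a ^ (n + 1) := by rw [mul_smul_comm, ← pow_succ']
    calc a ^ (n + 2) * b = a * (a ^ (n + 1) * b) := by rw [pow_succ' a (n + 1), mul_assoc]
      _ = c ^ (n + 1) • ((a * b) * a ^ (n + 1))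
            + (∑ k ∈ Finset.range (n + 1), c ^ k) • d • a ^ (n + 1) := by
        rw [ih, mul_add, mul_smul_comm, mul_smul_comm, hd, mul_assoc]
      _ = _ := by
        rw [h, add_mul, smul_mul_assoc, mul_assoc, ← pow_succ',
          ← Algebra.smul_def, Finset.sum_range_succ _ (n + 1), pow_succ c (n + 1), mul_comm _ c]
        module

theorem commute_pow_left_of_mul_eq_smul_add (h : a * b = c • (b * a) + algebraMap F A d)
    {l : ℕ} (hcl : c ^ l = 1) (hc : c ≠ 1) : Commute (a ^ l) b := by
  rcases l with _ | n
  · exact pow_zero a ▸ Commute.one_left b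
  have hsum : ∑ k ∈ Finset.range (n + 1), c ^ k = 0 := by
    rw [geom_sum_eq hc, hcl, sub_self, zero_div]
  rw [Commute, SemiconjBy, pow_succ_mul_of_mul_eq_smul_add h, hcl, hsum, one_smul, zero_smul,
    add_zero]

theorem mul_eq_inv_smul_add_of_mul_eq_smul_add (h : a * b = c • (b * a) + algebraMap F A d)
    (hc : c ≠ 0) : b * a = c⁻¹ • (a * b) + algebraMap F A (-(c⁻¹ * d)) := by
  rw [h, smul_add, inv_smul_smul₀ hc, map_neg, map_mul, ← Algebra.smul_def,
    add_neg_cancel_right]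

theorem commute_pow_right_of_mul_eq_smul_add (h : a * b = c • (b * a) + algebraMap F A d)
    {l : ℕ} (hcl : c ^ l = 1) (hc : c ≠ 1) : Commute a (b ^ l) := by
  rcases Nat.eq_zero_or_pos l with rfl | hl
  · exact pow_zero b ▸ Commute.one_right a
  have hc0 : c ≠ 0 := by rintro rfl; exact zero_ne_one ((zero_pow hl.ne').symm.trans hcl)
  exact (commute_pow_left_of_mul_eq_smul_add (mul_eq_inv_smul_add_of_mul_eq_smul_add h hc0)
    (by rw [inv_pow, hcl, inv_one]) (inv_ne_one.mpr hc)).symm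

end SkewCommutation

theorem Subalgebra.mem_center_of_adjoin_eq_top {R A : Type*} [CommSemiring R] [Semiring A]
    [Algebra R A] {s : Set A} (hs : Algebra.adjoin R s = ⊤) {w : A}
    (hw : ∀ a ∈ s, Commute a w) : w ∈ Subalgebra.center R A := by
  have hle : Algebra.adjoin R s ≤ Subalgebra.centralizer R {w} :=
    Algebra.adjoin_le fun a ha =>
      (Subalgebra.mem_centralizer_iff R).mpr fun _ hb => hb ▸ (hw a ha).eq.symm
  refine Subalgebra.mem_center_iff.mpr fun b => ?_
  exact ((Subalgebra.mem_centralizer_iff R).mp (hle (hs ▸ Algebra.mem_top)) w rfl).symm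

section CQW

variable (q α β γ : K)

theorem adjoin_Xg_Yg_Zg : Algebra.adjoin K {Xg q α β γ, Yg q α β γ, Zg q α β γ} = ⊤ := by
  have hrange : {Xg q α β γ, Yg q α β γ, Zg q α β γ} =
      RingQuot.mkAlgHom K (CQWRel K q α β γ) '' Set.range (ι K) := by
    rw [← Set.range_comp]
    ext x
    simp [Fin.exists_fin_succ, Xg, Yg, Zg, eq_comm]
  rw [hrange, Algebra.adjoin_image, FreeAlgebra.adjoin_range_ι, Algebra.map_top,
    AlgHom.range_eq_top]
  exact RingQuot.mkAlgHom_surjective K _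

theorem Xg_mul_Yg : Xg q α β γ * Yg q α β γ =
    q ^ 2 • (Yg q α β γ * Xg q α β γ) + algebraMap K _ α := by
  simpa [Xg, Yg, Zg] using
    RingQuot.mkAlgHom_rel K (CQWRel.xy (q := q) (α := α) (β := β) (γ := γ))

theorem Xg_mul_Zg : Xg q α β γ * Zg q α β γ =
    (q ^ 2)⁻¹ • (Zg q α β γ * Xg q α β γ) + algebraMap K _ β := by
  simpa [Xg, Yg, Zg] using
    RingQuot.mkAlgHom_rel K (CQWRel.xz (q := q) (α := α) (β := β) (γ := γ))

theorem Yg_mul_Zg : Yg q α β γ * Zg q α β γ =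
    q ^ 2 • (Zg q α β γ * Yg q α β γ) + algebraMap K _ γ := by
  simpa [Xg, Yg, Zg] using
    RingQuot.mkAlgHom_rel K (CQWRel.yz (q := q) (α := α) (β := β) (γ := γ))

end CQW

/-- If `q²` is a primitive `l`-th root of unity (`l > 1`), then `x^l`, `y^l` and `z^l`
are central in `A(α,β,γ)`. -/
theorem stmt4 (q α β γ : K) (l : ℕ) (hl : 1 < l) (hq : IsPrimitiveRoot (q ^ 2) l) :
    Xg q α β γ ^ l ∈ Subalgebra.center K (CQW K q α β γ) ∧
    Yg q α β γ ^ l ∈ Subalgebra.center K (CQW K q α β γ) ∧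
    Zg q α β γ ^ l ∈ Subalgebra.center K (CQW K q α β γ) := by
  have hc : (q ^ 2) ^ l = 1 := hq.pow_eq_one
  have hc1 : q ^ 2 ≠ 1 := hq.ne_one hl
  have hc' : (q ^ 2)⁻¹ ^ l = 1 := by rw [inv_pow, hc, inv_one]
  have hc1' : (q ^ 2)⁻¹ ≠ 1 := inv_ne_one.mpr hc1
  have hxy := Xg_mul_Yg q α β γ
  have hxz := Xg_mul_Zg q α β γ
  have hyz := Yg_mul_Zg q α β γ
  refine ⟨?_, ?_, ?_⟩ <;>
    refine Subalgebra.mem_center_of_adjoin_eq_top (adjoin_Xg_Yg_Zg q α β γ) ?_ <;>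
    simp only [Set.mem_insert_iff, Set.mem_singleton_iff, forall_eq_or_imp, forall_eq]
  · exact ⟨(Commute.refl _).pow_right l, (commute_pow_left_of_mul_eq_smul_add hxy hc hc1).symm,
      (commute_pow_left_of_mul_eq_smul_add hxz hc' hc1').symm⟩
  · exact ⟨commute_pow_right_of_mul_eq_smul_add hxy hc hc1, (Commute.refl _).pow_right l,
      (commute_pow_left_of_mul_eq_smul_add hyz hc hc1).symm⟩
  · exact ⟨commute_pow_right_of_mul_eq_smul_add hxz hc' hc1',
      commute_pow_right_of_mul_eq_smul_add hyz hc hc1, (Commute.refl _).pow_right l⟩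
end
end

section
/- The element Ω := yxz + (q⁻²γ/(q²−1))x − (q²β/(q²−1))y + (α/(q²−1))z is central in A(α,β,γ), i.e., Ω commutes with x, y and z. -/
noncomputable section

open FreeAlgebra

variable {K : Type} [Field K]

/-- The element `Ω = yxz + (q⁻²γ/(q²-1))x - (q²β/(q²-1))y + (α/(q²-1))z` of `A(α,β,γ)`. -/
def OmegaElt (q α β γ : K) : CQW K q α β γ :=
  Yg q α β γ * Xg q α β γ * Zg q α β γ + (q⁻¹ ^ 2 * γ / (q ^ 2 - 1)) • Xg q α β γ -
    (q ^ 2 * β / (q ^ 2 - 1)) • Yg q α β γ + (α / (q ^ 2 - 1)) • Zg q α β γ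

set_option maxHeartbeats 1000000 in
/-- `Ω` is central in `A(α,β,γ)`; in particular it commutes with `x`, `y` and `z`. -/
theorem stmt5 (q α β γ : K) (hq : q ≠ 0) (hq2 : q ^ 2 ≠ 1) :
    OmegaElt q α β γ ∈ Subalgebra.center K (CQW K q α β γ) ∧
    OmegaElt q α β γ * Xg q α β γ = Xg q α β γ * OmegaElt q α β γ ∧
    OmegaElt q α β γ * Yg q α β γ = Yg q α β γ * OmegaElt q α β γ ∧
    OmegaElt q α β γ * Zg q α β γ = Zg q α β γ * OmegaElt q α β γ := by
  have hq1 : q ^ 2 - 1 ≠ 0 := sub_ne_zero.mpr hq2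
  set X := Xg q α β γ with hX
  set Y := Yg q α β γ with hY
  set Z := Zg q α β γ with hZ
  have hxy : X * Y = q ^ 2 • (Y * X) + algebraMap K _ α := by
    have := RingQuot.mkAlgHom_rel K (CQWRel.xy (K := K) (q := q) (α := α) (β := β) (γ := γ))
    simpa [hX, hY, Xg, Yg, map_mul, map_add, map_smul] using this
  have hxz : X * Z = q⁻¹ ^ 2 • (Z * X) + algebraMap K _ β := by
    have := RingQuot.mkAlgHom_rel K (CQWRel.xz (K := K) (q := q) (α := α) (β := β) (γ := γ))
    simpa [hX, hZ, Xg, Zg, map_mul, map_add, map_smul] using this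
  have hyz : Y * Z = q ^ 2 • (Z * Y) + algebraMap K _ γ := by
    have := RingQuot.mkAlgHom_rel K (CQWRel.yz (K := K) (q := q) (α := α) (β := β) (γ := γ))
    simpa [hY, hZ, Yg, Zg, map_mul, map_add, map_smul] using this
  have hxy' : ∀ t, X * (Y * t) = q ^ 2 • (Y * (X * t)) + α • t := by
    intro t
    rw [← mul_assoc, hxy, add_mul, smul_mul_assoc, mul_assoc, ← Algebra.smul_def]
  have hxz' : ∀ t, X * (Z * t) = q⁻¹ ^ 2 • (Z * (X * t)) + β • t := by
    intro t
    rw [← mul_assoc, hxz, add_mul, smul_mul_assoc, mul_assoc, ← Algebra.smul_def]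
  have hyz' : ∀ t, Y * (Z * t) = q ^ 2 • (Z * (Y * t)) + γ • t := by
    intro t
    rw [← mul_assoc, hyz, add_mul, smul_mul_assoc, mul_assoc, ← Algebra.smul_def]
  have hden : -q ^ 10 + q ^ 12 ≠ 0 := by
    have h : -q ^ 10 + q ^ 12 = q ^ 10 * (q ^ 2 - 1) := by ring
    rw [h]
    exact mul_ne_zero (pow_ne_zero 10 hq) hq1
  have hkey : γ * q ^ 16 * (-q ^ 10 + q ^ 12)⁻¹ - γ * q ^ 14 * (-q ^ 10 + q ^ 12)⁻¹
      = γ * q ^ 4 := by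
    rw [show γ * q ^ 16 * (-q ^ 10 + q ^ 12)⁻¹ - γ * q ^ 14 * (-q ^ 10 + q ^ 12)⁻¹
        = γ * q ^ 4 * ((-q ^ 10 + q ^ 12) * (-q ^ 10 + q ^ 12)⁻¹) from by ring,
      mul_inv_cancel₀ hden, mul_one]
  have hcx : OmegaElt q α β γ * X = X * OmegaElt q α β γ := by
    rw [OmegaElt, ← hX, ← hY, ← hZ]
    simp only [mul_add, add_mul, mul_sub, sub_mul, smul_mul_assoc, mul_smul_comm, mul_assoc,
      hxy', hxz', hyz', hxy, hxz, hyz, smul_add, smul_sub, smul_smul,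
      Algebra.algebraMap_eq_smul_one, mul_one, one_mul]
    match_scalars
    all_goals rw [← sub_eq_zero]
    all_goals try field_simp
    all_goals try ring
    all_goals linear_combination hkey
  have hcy : OmegaElt q α β γ * Y = Y * OmegaElt q α β γ := by
    rw [OmegaElt, ← hX, ← hY, ← hZ]
    simp only [mul_add, add_mul, mul_sub, sub_mul, smul_mul_assoc, mul_smul_comm, mul_assoc,
      hxy', hxz', hyz', hxy, hxz, hyz, smul_add, smul_sub, smul_smul,
      Algebra.algebraMap_eq_smul_one, mul_one, one_mul]
    match_scalars
    all_goals rw [← sub_eq_zero]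
    all_goals try field_simp
    all_goals try ring
    all_goals linear_combination hkey
  have hcz : OmegaElt q α β γ * Z = Z * OmegaElt q α β γ := by
    rw [OmegaElt, ← hX, ← hY, ← hZ]
    simp only [mul_add, add_mul, mul_sub, sub_mul, smul_mul_assoc, mul_smul_comm, mul_assoc,
      hxy', hxz', hyz', hxy, hxz, hyz, smul_add, smul_sub, smul_smul,
      Algebra.algebraMap_eq_smul_one, mul_one, one_mul]
    match_scalars
    all_goals rw [← sub_eq_zero]
    all_goals try field_simp
    all_goals try ring
    all_goals linear_combination hkey
  refine ⟨?_, hcx, hcy, hcz⟩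
  rw [Subalgebra.mem_center_iff]
  intro b
  obtain ⟨a, rfl⟩ := RingQuot.mkAlgHom_surjective K (CQWRel K q α β γ) b
  induction a using FreeAlgebra.induction with
  | grade0 r => rw [AlgHom.commutes]; exact Algebra.commutes r _
  | grade1 i =>
    fin_cases i
    · exact hcx.symm
    · exact hcy.symm
    · exact hcz.symm
  | mul a b ha hb => rw [map_mul, mul_assoc, hb, ← mul_assoc, ha, mul_assoc]
  | add a b ha hb => rw [map_add, add_mul, mul_add, ha, hb]
end
end

section
/- In A(α,β,γ), set e := xz − q²β/(q²−1) and f := yz + γ/(q²−1). Then ez = q⁻²ze and fz = q²zf. -/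
noncomputable section

open FreeAlgebra

variable {K : Type} [Field K]

/-- The element `e = xz - q²β/(q²-1)` of `A(α,β,γ)`. -/
def eElt (q α β γ : K) : CQW K q α β γ :=
  Xg q α β γ * Zg q α β γ - algebraMap K (CQW K q α β γ) (q ^ 2 * β / (q ^ 2 - 1))

/-- The element `f = yz + γ/(q²-1)` of `A(α,β,γ)`. -/
def fElt (q α β γ : K) : CQW K q α β γ :=
  Yg q α β γ * Zg q α β γ + algebraMap K (CQW K q α β γ) (γ / (q ^ 2 - 1))

/-- In `A(α,β,γ)`: `ez = q⁻²ze` and `fz = q²zf`. -/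
theorem stmt6 (q α β γ : K) (hq : q ≠ 0) (hq2 : q ^ 2 ≠ 1) :
    eElt q α β γ * Zg q α β γ = q⁻¹ ^ 2 • (Zg q α β γ * eElt q α β γ) ∧
    fElt q α β γ * Zg q α β γ = q ^ 2 • (Zg q α β γ * fElt q α β γ) := by
  have hd : q ^ 2 - 1 ≠ 0 := sub_ne_zero.mpr hq2
  have hxz : Xg q α β γ * Zg q α β γ =
      q⁻¹ ^ 2 • (Zg q α β γ * Xg q α β γ) + algebraMap K (CQW K q α β γ) β := by
    have := RingQuot.mkAlgHom_rel K (CQWRel.xz (K := K) (q := q) (α := α) (β := β) (γ := γ))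
    simpa [Xg, Zg, map_mul, map_add, map_smul] using this
  have hyz : Yg q α β γ * Zg q α β γ =
      q ^ 2 • (Zg q α β γ * Yg q α β γ) + algebraMap K (CQW K q α β γ) γ := by
    have := RingQuot.mkAlgHom_rel K (CQWRel.yz (K := K) (q := q) (α := α) (β := β) (γ := γ))
    simpa [Yg, Zg, map_mul, map_add, map_smul] using this
  constructor
  · unfold eElt
    simp only [hxz, sub_mul, add_mul, mul_add, mul_sub, smul_mul_assoc, mul_smul_comm,
      Algebra.algebraMap_eq_smul_one, smul_smul, mul_assoc, one_mul, mul_one, smul_add, smul_sub]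
    match_scalars <;> field_simp <;> ring
  · unfold fElt
    simp only [hyz, sub_mul, add_mul, mul_add, mul_sub, smul_mul_assoc, mul_smul_comm,
      Algebra.algebraMap_eq_smul_one, smul_smul, mul_assoc, one_mul, mul_one, smul_add, smul_sub]
    match_scalars <;> field_simp <;> ring
end
end

section
/- Let V be a finite-dimensional module over A(α,β,γ) (q² a primitive l-th root of unity) on which z acts nilpotently and β ≠ 0. If v ∈ V satisfies vz = 0 and v ≠ 0, then the vectors v, vx, vx², …, vx^{l−1} are all nonzero. -/
/-!
Commuting `z` past `x^{a+1}` with `x z = q⁻² z x + β` (right action) gives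
`v x^{a+1} z = β (1 + q⁻² + ⋯ + q^{-2a}) v x^a` whenever `v z = 0`. If `v x^{a+1} = 0` but
`v x^a ≠ 0`, this partial geometric sum vanishes, so `(q⁻²)^{a+1} = 1`, which is impossible
for `a + 1 < l` since `q⁻²` is again a primitive `l`-th root of unity.
-/

open Finset

theorem IsPrimitiveRoot.geom_sum_ne_zero_of_lt {R : Type*} [CommRing R] {ζ : R} {l m : ℕ}
    (hζ : IsPrimitiveRoot ζ l) (hm : 0 < m) (hml : m < l) : ∑ i ∈ range m, ζ ^ i ≠ 0 := by
  intro hsum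
  have hpow : ζ ^ m - 1 = 0 := by rw [← geom_sum_mul, hsum, zero_mul]
  exact hζ.pow_ne_one_of_pos_of_lt hm.ne' hml (sub_eq_zero.mp hpow)

section TwistedCommutation

variable {R V : Type*} [CommRing R] [AddCommGroup V] [Module R V]
  {X Z : V →ₗ[R] V} {c β : R}

theorem apply_pow_succ_of_twisted_comm (hXZ : ∀ m : V, Z (X m) = c • X (Z m) + β • m)
    (a : ℕ) (m : V) :
    Z ((X ^ (a + 1)) m)
      = c ^ (a + 1) • (X ^ (a + 1)) (Z m) + (β * ∑ i ∈ range (a + 1), c ^ i) • (X ^ a) m := by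
  have hX : ∀ (n : ℕ) (w : V), X ((X ^ n) w) = (X ^ (n + 1)) w := fun n w => by
    rw [pow_succ', Module.End.mul_apply]
  induction a with
  | zero => simp [hXZ]
  | succ a ih =>
    rw [← hX (a + 1), hXZ, ih, map_add, map_smul, map_smul, hX, hX, smul_add, smul_smul,
      smul_smul, ← pow_succ', add_assoc, ← add_smul, geom_sum_succ (n := a + 1)]
    congr 2
    ring

theorem pow_apply_ne_zero_of_twisted_comm [IsDomain R] [Module.IsTorsionFree R V]
    (hXZ : ∀ m : V, Z (X m) = c • X (Z m) + β • m) {l : ℕ} (hc : IsPrimitiveRoot c l)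
    (hβ : β ≠ 0) {v : V} (hv : v ≠ 0) (hvz : Z v = 0) :
    ∀ k < l, (X ^ k) v ≠ 0 := by
  intro k hk
  induction k with
  | zero => simpa using hv
  | succ a ih =>
    intro hXv
    have hZXv : (β * ∑ i ∈ range (a + 1), c ^ i) • (X ^ a) v = 0 := by
      simpa [hvz, hXv] using (apply_pow_succ_of_twisted_comm hXZ a v).symm
    have hcoeff : β * ∑ i ∈ range (a + 1), c ^ i ≠ 0 :=
      mul_ne_zero hβ (hc.geom_sum_ne_zero_of_lt a.succ_pos hk)
    exact ih (by omega) ((smul_eq_zero.mp hZXv).resolve_left hcoeff)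

end TwistedCommutation

theorem stmt13_general {K : Type} [Field K] (q β : K) (l : ℕ) (hl : 1 < l)
    (hq : IsPrimitiveRoot (q ^ 2) l) (hβ : β ≠ 0)
    (V : Type) [AddCommGroup V] [Module K V]
    (X Z : V →ₗ[K] V)
    (hxz : ∀ m : V, Z (X m) = q⁻¹ ^ 2 • X (Z m) + β • m)
    (v : V) (hv : v ≠ 0) (hvz : Z v = 0) :
    ∀ k : ℕ, k ≤ l - 1 → (X ^ k) v ≠ 0 := by
  have hq' : IsPrimitiveRoot (q⁻¹ ^ 2) l := by simpa only [inv_pow] using hq.inv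
  intro k hk
  exact pow_apply_ne_zero_of_twisted_comm hxz hq' hβ hv hvz k (by omega)

/-- Let `V` be a finite-dimensional right module over `A(α,β,γ)` (given by linear operators
`X, Y, Z` satisfying the right-action form of the defining relations
`xy = q²yx + α`, `xz = q⁻²zx + β`, `yz = q²zy + γ`), where `q²` is a primitive `l`-th root of
unity, `z` acts nilpotently and `β ≠ 0`. If `v ≠ 0` satisfies `v·z = 0`, then the vectors
`v, v·x, v·x², …, v·x^{l-1}` are all nonzero. -/
theorem stmt13 {K : Type} [Field K] (q α β γ : K) (l : ℕ) (hl : 1 < l)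
    (hq : IsPrimitiveRoot (q ^ 2) l) (hβ : β ≠ 0)
    (V : Type) [AddCommGroup V] [Module K V] [FiniteDimensional K V]
    (X Y Z : V →ₗ[K] V)
    (hxy : ∀ m : V, Y (X m) = q ^ 2 • X (Y m) + α • m)
    (hxz : ∀ m : V, Z (X m) = q⁻¹ ^ 2 • X (Z m) + β • m)
    (hyz : ∀ m : V, Z (Y m) = q ^ 2 • Y (Z m) + γ • m)
    (hZnil : ∃ n : ℕ, Z ^ n = 0)
    (v : V) (hv : v ≠ 0) (hvz : Z v = 0) :
    ∀ k : ℕ, k ≤ l - 1 → (X ^ k) v ≠ 0 :=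
  stmt13_general q β l hl hq hβ V X Z hxz v hv hvz
end

section
/- Let q² be a primitive l-th root of unity (l>1), μ = (μ₁,μ₂) ∈ (K*)², and α ∈ K*. Define a right action of A(α,0,0) on the K-space M₆(μ) with basis m_0,…,m_{l−1} by m_k·x = μ₁ m_{k+1 mod l}, m_k·y = μ₁⁻¹ ((q^{2k}μ₂ − α)/(q²−1)) m_{k−1 mod l}, m_k·z = 0. These operators satisfy the defining relations of A(α,0,0): XY = q²YX + α·id, XZ = q⁻²ZX, YZ = q²ZY, where X, Y, Z denote the linear operators of x, y, z respectively. -/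
noncomputable section

/-- The matrix (row `k` = expansion of `m_k·x`) of the action of `x` on `M₆(μ)`:
`m_k·x = μ₁ m_{k+1 mod l}`. -/
def M6X {K : Type} [Field K] (μ₁ : K) (l : ℕ) [NeZero l] : Matrix (Fin l) (Fin l) K :=
  Matrix.of fun k j => if j = k + 1 then μ₁ else 0

/-- The matrix of the action of `y` on `M₆(μ)`:
`m_k·y = μ₁⁻¹ ((q^{2k}μ₂ - α)/(q²-1)) m_{k-1 mod l}`. -/
def M6Y {K : Type} [Field K] (q α μ₁ μ₂ : K) (l : ℕ) [NeZero l] : Matrix (Fin l) (Fin l) K :=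
  Matrix.of fun k j =>
    if j = k - 1 then μ₁⁻¹ * ((q ^ (2 * (k : ℕ)) * μ₂ - α) / (q ^ 2 - 1)) else 0

/-- The matrix of the action of `z` on `M₆(μ)`: `m_k·z = 0`. -/
def M6Z {K : Type} [Field K] (l : ℕ) : Matrix (Fin l) (Fin l) K := 0

theorem pow_val_fin_add_one {M : Type*} [Monoid M] {l : ℕ} [NeZero l] {ζ : M}
    (hζ : ζ ^ l = 1) (k : Fin l) : ζ ^ ((k + 1 : Fin l) : ℕ) = ζ ^ (k : ℕ) * ζ := by
  rw [Fin.val_add, Fin.val_one', Nat.add_mod_mod, ← pow_eq_pow_mod _ hζ, pow_succ]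

section
variable {K : Type} [Field K] {l : ℕ} [NeZero l]

theorem M6X_mul_apply (μ₁ : K) (A : Matrix (Fin l) (Fin l) K) (k j : Fin l) :
    (M6X μ₁ l * A) k j = μ₁ * A (k + 1) j := by
  simp [M6X, Matrix.mul_apply, ite_mul]

theorem M6Y_mul_apply (q α μ₁ μ₂ : K) (A : Matrix (Fin l) (Fin l) K) (k j : Fin l) :
    (M6Y q α μ₁ μ₂ l * A) k j =
      μ₁⁻¹ * ((q ^ (2 * (k : ℕ)) * μ₂ - α) / (q ^ 2 - 1)) * A (k - 1) j := by
  simp [M6Y, Matrix.mul_apply, ite_mul]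

theorem M6X_mul_M6Y {q : K} (hq : q ^ 2 ≠ 1) (hql : (q ^ 2) ^ l = 1) (α : K) {μ₁ : K}
    (hμ₁ : μ₁ ≠ 0) (μ₂ : K) :
    M6X μ₁ l * M6Y q α μ₁ μ₂ l = q ^ 2 • (M6Y q α μ₁ μ₂ l * M6X μ₁ l) + α • 1 := by
  have hq' : q ^ 2 - 1 ≠ 0 := sub_ne_zero.mpr hq
  ext k j
  rw [Matrix.add_apply, Matrix.smul_apply, Matrix.smul_apply, M6X_mul_apply, M6Y_mul_apply]
  by_cases hjk : j = k
  · subst hjk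
    -- At the wrap-around `j = l - 1` this is where `(q ^ 2) ^ l = 1` enters.
    have hexp : q ^ (2 * ((j + 1 : Fin l) : ℕ)) = q ^ (2 * (j : ℕ)) * q ^ 2 := by
      simp only [pow_mul, pow_val_fin_add_one hql]
    simp only [M6X, M6Y, Matrix.of_apply, Matrix.one_apply_eq, add_sub_cancel_right,
      sub_add_cancel, if_true, hexp, smul_eq_mul]
    field_simp
    ring
  · have hkj : k ≠ j := Ne.symm hjk
    simp [M6X, M6Y, Matrix.one_apply_ne hkj, hjk, eq_sub_iff_add_eq]

end

theorem stmt16_general {K : Type} [Field K] (q : K) (l : ℕ) [NeZero l] (hl : 1 < l)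
    (hq : IsPrimitiveRoot (q ^ 2) l) (α μ₁ μ₂ : K) (hμ₁ : μ₁ ≠ 0) :
    M6X μ₁ l * M6Y q α μ₁ μ₂ l = q ^ 2 • (M6Y q α μ₁ μ₂ l * M6X μ₁ l) + α • 1 ∧
    M6X μ₁ l * M6Z l = q⁻¹ ^ 2 • (M6Z l * M6X μ₁ l) ∧
    M6Y q α μ₁ μ₂ l * M6Z l = q ^ 2 • (M6Z l * M6Y q α μ₁ μ₂ l) :=
  ⟨M6X_mul_M6Y (hq.ne_one hl) hq.pow_eq_one α hμ₁ μ₂, by simp [M6Z], by simp [M6Z]⟩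

/-- The prescribed action on `M₆(μ)` satisfies the defining relations of `A(α,0,0)`:
`XY = q²YX + α·1`, `XZ = q⁻²ZX`, `YZ = q²ZY`, where `X`, `Y`, `Z` are the matrices of the
operators of `x`, `y`, `z` (rows indexed by the basis `m_0, …, m_{l-1}`). -/
theorem stmt16 {K : Type} [Field K] (q : K) (l : ℕ) [NeZero l] (hl : 1 < l)
    (hq : IsPrimitiveRoot (q ^ 2) l) (α μ₁ μ₂ : K) (hα : α ≠ 0) (hμ₁ : μ₁ ≠ 0)
    (hμ₂ : μ₂ ≠ 0) :
    M6X μ₁ l * M6Y q α μ₁ μ₂ l = q ^ 2 • (M6Y q α μ₁ μ₂ l * M6X μ₁ l) + α • 1 ∧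
    M6X μ₁ l * M6Z l = q⁻¹ ^ 2 • (M6Z l * M6X μ₁ l) ∧
    M6Y q α μ₁ μ₂ l * M6Z l = q ^ 2 • (M6Z l * M6Y q α μ₁ μ₂ l) :=
  stmt16_general q l hl hq α μ₁ μ₂ hμ₁
end
end

section
/- With the M₆(μ) action above (m_k·x = μ₁ m_{k+1 mod l}, m_k·y = μ₁⁻¹((q^{2k}μ₂−α)/(q²−1)) m_{k−1 mod l}, m_k·z = 0), each m_k is an eigenvector of the operator of yx with eigenvalue (q^{2k}μ₂ − α)/(q²−1), and these l eigenvalues are pairwise distinct; consequently any nonzero subspace of M₆(μ) invariant under x, y, z contains some basis vector m_k and hence equals M₆(μ), so M₆(μ) is a simple module of dimension l. -/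
noncomputable section

/-! The operator of `yx` is diagonal in the basis `m_k`, with eigenvalues that are pairwise
distinct because `q²` is a primitive `l`-th root of unity. Hence Lagrange interpolation in that
operator projects any nonzero invariant subspace onto a line `K m_k` inside it, and since `x`
permutes the `m_k` cyclically up to the unit `μ₁`, the subspace contains every `m_k`. -/

section InvariantSubspaces

variable {K ι : Type*} [Field K] [DecidableEq ι] {W : Submodule K (ι → K)} {d : ι → K}

lemma vecMul_diagonal_eq_mul [Fintype ι] (v : ι → K) :
    Matrix.vecMul v (Matrix.diagonal d) = v * d :=
  funext (Matrix.vecMul_diagonal v d)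

lemma prod_sub_mul_mem (hW : ∀ v ∈ W, v * d ∈ W) (s : Finset ι) {v : ι → K}
    (hv : v ∈ W) :
    (fun i => ∏ j ∈ s, (d i - d j)) * v ∈ W := by
  induction s using Finset.induction_on with
  | empty => simpa [Pi.one_def.symm] using hv
  | insert a s ha ih =>
    convert W.sub_mem (hW _ ih) (W.smul_mem (d a) ih) using 1
    ext i
    simp only [Finset.prod_insert ha, Pi.mul_apply, Pi.sub_apply, Pi.smul_apply, smul_eq_mul]
    ring

/-- Lagrange projection: applying `∏_{j ≠ k} (D - d j)` to `v` kills every coordinate but the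
`k`-th, which is multiplied by the nonzero `∏_{j ≠ k} (d k - d j)`. -/
lemma exists_single_mem_of_mul_mem [Fintype ι] (hd : Function.Injective d)
    (hW : ∀ v ∈ W, v * d ∈ W) (hW₀ : W ≠ ⊥) : ∃ k, Pi.single k 1 ∈ W := by
  obtain ⟨v, hv, hv₀⟩ := (Submodule.ne_bot_iff W).1 hW₀
  obtain ⟨k, hk : v k ≠ 0⟩ := Function.ne_iff.1 hv₀
  set c := ∏ j ∈ Finset.univ.erase k, (d k - d j)
  have hc : c ≠ 0 := Finset.prod_ne_zero_iff.2 fun j hj =>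
    sub_ne_zero.2 (hd.ne (Finset.ne_of_mem_erase hj).symm)
  have hproj : (fun i => ∏ j ∈ Finset.univ.erase k, (d i - d j)) * v =
      (c * v k) • Pi.single k 1 := by
    ext i
    rcases eq_or_ne i k with rfl | hik
    · simp [c, mul_comm]
    · simp [hik, Finset.prod_eq_zero (Finset.mem_erase.2 ⟨hik, Finset.mem_univ i⟩)]
  refine ⟨k, ?_⟩
  have := W.smul_mem (c * v k)⁻¹ (prod_sub_mul_mem hW (Finset.univ.erase k) hv)
  rwa [hproj, smul_smul, inv_mul_cancel₀ (mul_ne_zero hc hk), one_smul] at this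

end InvariantSubspaces

lemma eq_top_of_single_mem_of_succ {K : Type*} [Field K] {l : ℕ} [NeZero l]
    {W : Submodule K (Fin l → K)}
    (hsucc : ∀ j, Pi.single j 1 ∈ W → Pi.single (j + 1) 1 ∈ W)
    {k : Fin l} (hk : Pi.single k 1 ∈ W) : W = ⊤ := by
  open Fin.NatCast in
  have hshift (m : ℕ) : Pi.single (k + m) 1 ∈ W := by
    induction m with
    | zero => simpa using hk
    | succ m ih => simpa [add_assoc] using hsucc _ ih
  rw [eq_top_iff, ← (Pi.basisFun K (Fin l)).span_eq, Submodule.span_le]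
  rintro _ ⟨j, rfl⟩
  open Fin.NatCast in
  simpa using hshift (j - k).val

lemma single_vecMul_M6X {K : Type} [Field K] (μ₁ : K) {l : ℕ} [NeZero l] (k : Fin l) :
    Matrix.vecMul (Pi.single k 1) (M6X μ₁ l) = Pi.single (k + 1) μ₁ := by
  ext j
  simp [M6X, Pi.single_apply]

lemma M6Y_mul_M6X {K : Type} [Field K] (q α : K) {μ₁ : K} (μ₂ : K) (l : ℕ) [NeZero l]
    (hμ₁ : μ₁ ≠ 0) :
    M6Y q α μ₁ μ₂ l * M6X μ₁ l =
      Matrix.diagonal (fun k : Fin l => (q ^ (2 * (k : ℕ)) * μ₂ - α) / (q ^ 2 - 1)) := by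
  ext k j
  rw [Matrix.mul_apply, Finset.sum_eq_single (k - 1)]
  · rcases eq_or_ne j k with rfl | hjk
    · simp [M6X, M6Y, mul_right_comm _ _ μ₁, hμ₁]
    · simp [M6X, M6Y, hjk, hjk.symm]
  · intro i _ hi
    simp [M6Y, hi]
  · simp

lemma M6_eigenvalue_injective {K : Type} [Field K] {q : K} {l : ℕ} (hl : 1 < l)
    (hq : IsPrimitiveRoot (q ^ 2) l) (α : K) {μ₂ : K} (hμ₂ : μ₂ ≠ 0) :
    Function.Injective fun k : Fin l => (q ^ (2 * (k : ℕ)) * μ₂ - α) / (q ^ 2 - 1) := by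
  have hq₁ : q ^ 2 - 1 ≠ 0 := sub_ne_zero.2 (hq.ne_one hl)
  intro a b hab
  simp only [div_left_inj' hq₁, sub_left_inj, mul_left_inj' hμ₂, pow_mul] at hab
  exact Fin.ext (hq.pow_inj a.2 b.2 hab)

theorem stmt17_general {K : Type} [Field K] (q : K) (l : ℕ) [NeZero l] (hl : 1 < l)
    (hq : IsPrimitiveRoot (q ^ 2) l) (α μ₁ μ₂ : K) (hμ₁ : μ₁ ≠ 0)
    (hμ₂ : μ₂ ≠ 0) :
    M6Y q α μ₁ μ₂ l * M6X μ₁ l =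
        Matrix.diagonal (fun k : Fin l => (q ^ (2 * (k : ℕ)) * μ₂ - α) / (q ^ 2 - 1)) ∧
    (Function.Injective fun k : Fin l => (q ^ (2 * (k : ℕ)) * μ₂ - α) / (q ^ 2 - 1)) ∧
    (∀ W : Submodule K (Fin l → K),
      (∀ v ∈ W, Matrix.vecMul v (M6X μ₁ l) ∈ W) →
      (∀ v ∈ W, Matrix.vecMul v (M6Y q α μ₁ μ₂ l) ∈ W) →
      (∀ v ∈ W, Matrix.vecMul v (M6Z l : Matrix (Fin l) (Fin l) K) ∈ W) →
      W ≠ ⊥ → (∃ k : Fin l, (Pi.single k 1 : Fin l → K) ∈ W) ∧ W = ⊤) ∧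
    Module.finrank K (Fin l → K) = l := by
  set ev : Fin l → K := fun k => (q ^ (2 * (k : ℕ)) * μ₂ - α) / (q ^ 2 - 1)
  have hprod : M6Y q α μ₁ μ₂ l * M6X μ₁ l = Matrix.diagonal ev :=
    M6Y_mul_M6X q α μ₂ l hμ₁
  have hinj : Function.Injective ev := M6_eigenvalue_injective hl hq α hμ₂
  refine ⟨hprod, hinj, fun W hX hY _ hW => ?_, Module.finrank_fin_fun K⟩
  have hdiag : ∀ v ∈ W, v * ev ∈ W := by
    intro v hv
    have := hX _ (hY v hv)
    rwa [Matrix.vecMul_vecMul, hprod, vecMul_diagonal_eq_mul] at this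
  obtain ⟨k, hk⟩ := exists_single_mem_of_mul_mem hinj hdiag hW
  refine ⟨⟨k, hk⟩, eq_top_of_single_mem_of_succ ?_ hk⟩
  intro j hj
  have := W.smul_mem μ₁⁻¹ (hX _ hj)
  rwa [single_vecMul_M6X, ← Pi.single_smul, smul_eq_mul, inv_mul_cancel₀ hμ₁] at this

/-- For the `M₆(μ)` action, each `m_k` is an eigenvector of the operator of `yx` with
eigenvalue `(q^{2k}μ₂ - α)/(q²-1)`; these `l` eigenvalues are pairwise distinct;
consequently every nonzero subspace of `M₆(μ)` invariant under the (right) actions of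
`x`, `y`, `z` contains a basis vector `m_k` and equals all of `M₆(μ)`; so `M₆(μ)` is a
simple module of dimension `l`. -/
theorem stmt17 {K : Type} [Field K] (q : K) (l : ℕ) [NeZero l] (hl : 1 < l)
    (hq : IsPrimitiveRoot (q ^ 2) l) (α μ₁ μ₂ : K) (hα : α ≠ 0) (hμ₁ : μ₁ ≠ 0)
    (hμ₂ : μ₂ ≠ 0) :
    M6Y q α μ₁ μ₂ l * M6X μ₁ l =
        Matrix.diagonal (fun k : Fin l => (q ^ (2 * (k : ℕ)) * μ₂ - α) / (q ^ 2 - 1)) ∧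
    (Function.Injective fun k : Fin l => (q ^ (2 * (k : ℕ)) * μ₂ - α) / (q ^ 2 - 1)) ∧
    (∀ W : Submodule K (Fin l → K),
      (∀ v ∈ W, Matrix.vecMul v (M6X μ₁ l) ∈ W) →
      (∀ v ∈ W, Matrix.vecMul v (M6Y q α μ₁ μ₂ l) ∈ W) →
      (∀ v ∈ W, Matrix.vecMul v (M6Z l : Matrix (Fin l) (Fin l) K) ∈ W) →
      W ≠ ⊥ → (∃ k : Fin l, (Pi.single k 1 : Fin l → K) ∈ W) ∧ W = ⊤) ∧
    Module.finrank K (Fin l → K) = l :=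
  stmt17_general q l hl hq α μ₁ μ₂ hμ₁ hμ₂
end
end

section
/- Let V be a module over A(α,0,0) with α ≠ 0 and q² a primitive l-th root of unity. If w ∈ V is nonzero with wx = 0 and wy^s = 0, wy^{s−1} ≠ 0 for some 1 ≤ s ≤ l, then using (wy^s)x = q^{−2s} (wx) y^s − q^{−2}((1−q^{−2s})/(1−q^{−2})) α w y^{s−1} one obtains q^{2s} = 1 and hence s = l. -/
/-- Let `V` be a right module over `A(α,0,0)` (given by operators `X, Y, Z` satisfying the
right-action form of the relations `xy = q²yx + α`, `xz = q⁻²zx`, `yz = q²zy`), with `α ≠ 0`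
and `q²` a primitive `l`-th root of unity. If `w` satisfies `w·x = 0` and `w·y^s = 0`,
`w·y^{s-1} ≠ 0` for some `1 ≤ s ≤ l`, then `q^{2s} = 1` and hence `s = l`. -/
theorem stmt18 {K : Type} [Field K] (q α : K) (l : ℕ) (hl : 1 < l)
    (hq : IsPrimitiveRoot (q ^ 2) l) (hα : α ≠ 0)
    (V : Type) [AddCommGroup V] [Module K V]
    (X Y Z : V →ₗ[K] V)
    (hxy : ∀ m : V, Y (X m) = q ^ 2 • X (Y m) + α • m)
    (hxz : ∀ m : V, Z (X m) = q⁻¹ ^ 2 • X (Z m))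
    (hyz : ∀ m : V, Z (Y m) = q ^ 2 • Y (Z m))
    (w : V) (hw : w ≠ 0) (hwx : X w = 0)
    (s : ℕ) (hs1 : 1 ≤ s) (hs2 : s ≤ l)
    (h1 : (Y ^ s) w = 0) (h2 : (Y ^ (s - 1)) w ≠ 0) :
    q ^ (2 * s) = 1 ∧ s = l := by
  -- basic facts about q^2
  have hq2 : (q : K) ^ 2 ≠ 0 := by
    intro h
    have h1' := hq.pow_eq_one
    rw [h, zero_pow (by omega : l ≠ 0)] at h1'
    exact zero_ne_one h1'
  have hq1 : (q : K) ^ 2 ≠ 1 := by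
    intro h
    have hd : l ∣ 1 := hq.dvd_of_pow_eq_one 1 (by simp [h])
    exact absurd (Nat.le_of_dvd one_pos hd) (by omega)
  have hr0 : ((q : K) ^ 2)⁻¹ ≠ 0 := inv_ne_zero hq2
  have hr1 : ((q : K) ^ 2)⁻¹ ≠ 1 := by
    intro h
    exact hq1 (by rw [← inv_inv (q ^ 2), h, inv_one])
  -- key identity
  have key : ∀ a : ℕ, X ((Y ^ (a + 1)) w)
      = (-(α * ∑ i ∈ Finset.range (a + 1), ((q : K) ^ 2)⁻¹ ^ (i + 1))) • ((Y ^ a) w) := by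
    intro a
    induction a with
    | zero =>
      have h := hxy w
      rw [hwx, map_zero] at h
      have h' : q ^ 2 • X (Y w) = -(α • w) :=
        eq_neg_of_add_eq_zero_left h.symm
      have h'' := congrArg (fun v => ((q : K) ^ 2)⁻¹ • v) h'
      simp only [smul_smul, inv_mul_cancel₀ hq2, one_smul] at h''
      simp only [zero_add, pow_one, Finset.sum_range_one, Module.End.one_apply, pow_zero]
      rw [h'']
      match_scalars
      ring
    | succ a ih =>
      have h := hxy ((Y ^ (a + 1)) w)
      have hY2 : (Y ^ (a + 1 + 1)) w = Y ((Y ^ (a + 1)) w) := by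
        rw [pow_succ']; rfl
      rw [ih, map_smul] at h
      have hYa : Y ((Y ^ a) w) = (Y ^ (a + 1)) w := by
        rw [pow_succ']; rfl
      rw [hYa] at h
      have h' : q ^ 2 • X ((Y ^ (a + 1 + 1)) w)
          = (-(α * ∑ i ∈ Finset.range (a + 1), ((q : K) ^ 2)⁻¹ ^ (i + 1))) • (Y ^ (a + 1)) w
            - α • (Y ^ (a + 1)) w := by
        rw [hY2]
        exact eq_sub_of_add_eq h.symm
      have h'' := congrArg (fun v => ((q : K) ^ 2)⁻¹ • v) h'
      simp only [smul_smul, inv_mul_cancel₀ hq2, one_smul] at h''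
      have hS : (∑ i ∈ Finset.range (a + 1 + 1), ((q : K) ^ 2)⁻¹ ^ (i + 1))
          = ((q : K) ^ 2)⁻¹ * ((∑ i ∈ Finset.range (a + 1), ((q : K) ^ 2)⁻¹ ^ (i + 1)) + 1) := by
        rw [Finset.sum_range_succ', mul_add, mul_one, Finset.mul_sum]
        congr 1
        · exact Finset.sum_congr rfl fun i _ => by ring
        · ring
      rw [h'', hS]
      match_scalars
      ring
  -- apply at a = s - 1
  obtain ⟨t, rfl⟩ : ∃ t, s = t + 1 := ⟨s - 1, by omega⟩
  have hk := key t
  rw [h1, map_zero] at hk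
  have hts : t + 1 - 1 = t := by omega
  rw [hts] at h2
  have hc : -(α * ∑ i ∈ Finset.range (t + 1), ((q : K) ^ 2)⁻¹ ^ (i + 1)) = 0 := by
    by_contra hc
    exact h2 (by
      have := smul_eq_zero.mp hk.symm
      tauto)
  have hsum : (∑ i ∈ Finset.range (t + 1), ((q : K) ^ 2)⁻¹ ^ (i + 1)) = 0 := by
    rcases mul_eq_zero.mp (neg_eq_zero.mp hc) with h | h
    · exact absurd h hα
    · exact h
  have hsum' : (∑ i ∈ Finset.range (t + 1), ((q : K) ^ 2)⁻¹ ^ i) = 0 := by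
    have he : (∑ i ∈ Finset.range (t + 1), ((q : K) ^ 2)⁻¹ ^ (i + 1))
        = ((q : K) ^ 2)⁻¹ * ∑ i ∈ Finset.range (t + 1), ((q : K) ^ 2)⁻¹ ^ i := by
      rw [Finset.mul_sum]
      exact Finset.sum_congr rfl fun i _ => by ring
    rw [he] at hsum
    rcases mul_eq_zero.mp hsum with h | h
    · exact absurd h hr0
    · exact h
  have hrs : ((q : K) ^ 2)⁻¹ ^ (t + 1) = 1 := by
    rw [geom_sum_eq hr1] at hsum'
    rcases div_eq_zero_iff.mp hsum' with h | h
    · exact sub_eq_zero.mp h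
    · exact absurd (sub_eq_zero.mp h) hr1
  have hq2s : (q ^ 2) ^ (t + 1) = 1 := by
    have h := congrArg (fun x : K => x⁻¹) hrs
    simpa [← inv_pow, inv_inv] using h
  have hdvd : l ∣ (t + 1) := hq.dvd_of_pow_eq_one _ hq2s
  have hle : l ≤ t + 1 := Nat.le_of_dvd (by omega) hdvd
  constructor
  · rw [pow_mul]; exact hq2s
  · omega
end
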